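/- arXiv:1912.04004 — 4 statements merged into one kernel-verified Lean document; each statement's English description precedes it below -/
import Mathlib

section
/- Every graph with average degree greater than k-1 contains every double star with k edges as a subgraph. -/
open Finset SimpleGraph

lemma extract_sub {V : Type*} [Fintype V] [DecidableEq V] (G : SimpleGraph V)
    [DecidableRel G.Adj] (k : ℕ) :
    ∀ s : Finset V, ((k : ℤ) - 1) * s.card < ∑ v ∈ s, ((G.neighborFinset v ∩ s).card : ℤ) →
    ∃ t, t ⊆ s ∧ (((k : ℤ) - 1) * t.card < ∑ v ∈ t, ((G.neighborFinset v ∩ t).card : ℤ)) ∧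
      ∀ v ∈ t, k ≤ 2 * (G.neighborFinset v ∩ t).card := by
  intro s
  induction s using Finset.strongInductionOn with
  | _ s ih =>
    intro hD
    by_cases hall : ∀ v ∈ s, k ≤ 2 * (G.neighborFinset v ∩ s).card
    · exact ⟨s, subset_rfl, hD, hall⟩
    push_neg at hall
    obtain ⟨x, hx, hdx⟩ := hall
    set d : ℕ := (G.neighborFinset x ∩ s).card with hd_def
    have hd : 2 * (d : ℤ) ≤ (k : ℤ) - 1 := by push_cast; omega
    have step1 : ∀ v ∈ s.erase x,
        ((G.neighborFinset v ∩ s.erase x).card : ℤ)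
          = ((G.neighborFinset v ∩ s).card : ℤ) - (if G.Adj v x then 1 else 0) := by
      intro v hv
      have h1 : G.neighborFinset v ∩ s.erase x = (G.neighborFinset v ∩ s).erase x := by
        ext a
        simp only [Finset.mem_inter, Finset.mem_erase]
        tauto
      rw [h1]
      by_cases hadj : G.Adj v x
      · have hxmem : x ∈ G.neighborFinset v ∩ s :=
          Finset.mem_inter.mpr ⟨(G.mem_neighborFinset v x).mpr hadj, hx⟩
        rw [Finset.card_erase_of_mem hxmem, if_pos hadj]
        have : 1 ≤ (G.neighborFinset v ∩ s).card := Finset.card_pos.mpr ⟨x, hxmem⟩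
        push_cast
        omega
      · have hxmem : x ∉ G.neighborFinset v ∩ s := by
          simp only [Finset.mem_inter, G.mem_neighborFinset]
          tauto
        rw [Finset.erase_eq_of_notMem hxmem, if_neg hadj]
        ring
    have step2 : (∑ v ∈ s.erase x, ((if G.Adj v x then 1 else 0) : ℤ)) = (d : ℤ) := by
      rw [Finset.sum_boole]
      rw [hd_def]
      congr 1
      congr 1
      ext v
      simp only [Finset.mem_filter, Finset.mem_erase, Finset.mem_inter, G.mem_neighborFinset]
      constructor
      · rintro ⟨⟨hne, hvs⟩, hadj⟩; exact ⟨hadj.symm, hvs⟩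
      · rintro ⟨hadj, hvs⟩; exact ⟨⟨hadj.ne', hvs⟩, hadj.symm⟩
    have step3 : ∑ v ∈ s.erase x, ((G.neighborFinset v ∩ s.erase x).card : ℤ)
        = (∑ v ∈ s, ((G.neighborFinset v ∩ s).card : ℤ)) - 2 * d := by
      rw [Finset.sum_congr rfl step1, Finset.sum_sub_distrib, step2,
        ← Finset.sum_erase_add s _ hx]
      ring
    have hcard : ((s.erase x).card : ℤ) = (s.card : ℤ) - 1 := by
      rw [Finset.card_erase_of_mem hx]
      have : 1 ≤ s.card := Finset.card_pos.mpr ⟨x, hx⟩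
      omega
    have hD' : ((k : ℤ) - 1) * (s.erase x).card
        < ∑ v ∈ s.erase x, ((G.neighborFinset v ∩ s.erase x).card : ℤ) := by
      rw [step3, hcard]
      nlinarith [hD, hd]
    obtain ⟨t, hts, h1, h2⟩ := ih (s.erase x) (Finset.erase_ssubset hx) hD'
    exact ⟨t, hts.trans (Finset.erase_subset _ _), h1, h2⟩

lemma no_escape {W : Type*} (T : SimpleGraph W) (w y : W)
    (hNw : ∀ b, T.Adj w b → b = y) (hNy : ∀ b, T.Adj y b → b = w) :
    ∀ (c e : W) (q : T.Walk c e), w ≠ e → y ≠ e → c = w ∨ c = y → False := by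
  intro c e q
  induction q with
  | nil =>
    intro hw hyne hor
    rcases hor with rfl | rfl
    · exact hw rfl
    · exact hyne rfl
  | cons h q ih =>
    intro hw hyne hor
    rcases hor with rfl | rfl
    · exact ih hw hyne (Or.inr (hNw _ h))
    · exact ih hw hyne (Or.inl (hNy _ h))

lemma leaf_cover {W : Type*} [Fintype W] (T : SimpleGraph W) [DecidableRel T.Adj]
    (hconn : T.Connected) (u0 v0 : W)
    (hleaf : ∀ w, w ≠ u0 → w ≠ v0 → T.degree w = 1) :
    ∀ w, w ≠ u0 → w ≠ v0 → T.Adj u0 w ∨ T.Adj v0 w := by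
  intro w hw1 hw2
  have h1 : (T.neighborFinset w).card = 1 := hleaf w hw1 hw2
  obtain ⟨y, hy⟩ := Finset.card_eq_one.mp h1
  have hwy : T.Adj w y := by
    have : y ∈ T.neighborFinset w := by rw [hy]; exact Finset.mem_singleton_self y
    simpa [SimpleGraph.mem_neighborFinset] using this
  by_cases hy1 : y = u0
  · left; subst hy1; exact hwy.symm
  by_cases hy2 : y = v0
  · right; subst hy2; exact hwy.symm
  exfalso
  have hNy : T.neighborFinset y = {w} := by
    obtain ⟨z, hz⟩ := Finset.card_eq_one.mp (hleaf y hy1 hy2)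
    have hwz : w ∈ T.neighborFinset y := by
      simpa [SimpleGraph.mem_neighborFinset] using hwy.symm
    rw [hz] at hwz ⊢
    rw [Finset.mem_singleton] at hwz
    rw [hwz]
  obtain ⟨p⟩ := hconn.preconnected w u0
  have hNw' : ∀ b, T.Adj w b → b = y := by
    intro b hb
    have : b ∈ T.neighborFinset w := (SimpleGraph.mem_neighborFinset ..).mpr hb
    rw [hy, Finset.mem_singleton] at this
    exact this
  have hNy' : ∀ b, T.Adj y b → b = w := by
    intro b hb
    have : b ∈ T.neighborFinset y := (SimpleGraph.mem_neighborFinset ..).mpr hb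
    rw [hNy, Finset.mem_singleton] at this
    exact this
  exact no_escape T w y hNw' hNy' w u0 p hw1 hy1 (Or.inl rfl)

lemma main_aux {V W : Type*} [Fintype V] [Nonempty V] [Fintype W]
    [DecidableEq V] [DecidableEq W]
    (G : SimpleGraph V) [DecidableRel G.Adj]
    (T : SimpleGraph W) [DecidableRel T.Adj] (k : ℕ)
    (havg : ((G.edgeFinset.card : ℚ) * 2) / (Fintype.card V) > (k : ℚ) - 1)
    (hT : T.IsTree) (hTk : T.edgeFinset.card = k)
    (u0 v0 : W) (huv : T.Adj u0 v0)
    (hleaf : ∀ w : W, w ≠ u0 → w ≠ v0 → T.degree w = 1)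
    (hab : (T.neighborFinset u0 \ {v0}).card ≤ (T.neighborFinset v0 \ {u0}).card) :
    ∃ f : T →g G, Function.Injective f := by
  have hne : u0 ≠ v0 := huv.ne
  have hk1 : 1 ≤ k := by
    rw [← hTk]
    exact Finset.card_pos.mpr ⟨s(u0, v0), by simpa [SimpleGraph.mem_edgeFinset] using huv⟩
  -- Step 1: find a good subset t of V
  have hn : (0 : ℚ) < (Fintype.card V : ℚ) := by exact_mod_cast Fintype.card_pos
  rw [gt_iff_lt, lt_div_iff₀ hn] at havg
  have hstart : ((k : ℤ) - 1) * ((Finset.univ : Finset V).card)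
      < ∑ v ∈ (Finset.univ : Finset V), ((G.neighborFinset v ∩ Finset.univ).card : ℤ) := by
    have h2 : ∑ v ∈ (Finset.univ : Finset V), ((G.neighborFinset v ∩ Finset.univ).card : ℤ)
        = 2 * G.edgeFinset.card := by
      simp only [Finset.inter_univ]
      exact_mod_cast G.sum_degrees_eq_twice_card_edges
    rw [h2, Finset.card_univ]
    have hq : ((k : ℚ) - 1) * (Fintype.card V) < 2 * (G.edgeFinset.card : ℚ) := by linarith
    exact_mod_cast hq
  obtain ⟨t, -, hDt, hmin⟩ := extract_sub G k Finset.univ hstart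
  have hbig : ∃ v ∈ t, k ≤ (G.neighborFinset v ∩ t).card := by
    by_contra hcon
    push_neg at hcon
    have hle : ∑ v ∈ t, ((G.neighborFinset v ∩ t).card : ℤ) ≤ ((k : ℤ) - 1) * t.card := by
      calc ∑ v ∈ t, ((G.neighborFinset v ∩ t).card : ℤ)
          ≤ ∑ _v ∈ t, ((k : ℤ) - 1) :=
            Finset.sum_le_sum (fun v hv => by have := hcon v hv; push_cast; omega)
        _ = ((k : ℤ) - 1) * t.card := by rw [Finset.sum_const]; push_cast; ring
    linarith
  obtain ⟨v, hvt, hvdeg⟩ := hbig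
  have hvne : (G.neighborFinset v ∩ t).Nonempty := Finset.card_pos.mp (by omega)
  obtain ⟨u, hu⟩ := hvne
  have hut : u ∈ t := (Finset.mem_inter.mp hu).2
  have hadjvu : G.Adj v u := (G.mem_neighborFinset v u).mp (Finset.mem_inter.mp hu).1
  have hudeg : k ≤ 2 * (G.neighborFinset u ∩ t).card := hmin u hut
  -- Step 2: structure of T
  set A : Finset W := T.neighborFinset u0 \ {v0} with hA_def
  set B : Finset W := T.neighborFinset v0 \ {u0} with hB_def
  haveI : Nonempty W := ⟨u0⟩
  have hcardW : Fintype.card W = k + 1 := by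
    have := hT.card_edgeFinset
    rw [hTk] at this
    omega
  have hdegu0 : T.degree u0 = A.card + 1 := by
    have hv0mem : v0 ∈ T.neighborFinset u0 := (T.mem_neighborFinset ..).mpr huv
    have h1 : 1 ≤ (T.neighborFinset u0).card := Finset.card_pos.mpr ⟨v0, hv0mem⟩
    rw [hA_def, Finset.card_sdiff_of_subset (Finset.singleton_subset_iff.mpr hv0mem),
      Finset.card_singleton]
    have : T.degree u0 = (T.neighborFinset u0).card := rfl
    omega
  have hdegv0 : T.degree v0 = B.card + 1 := by
    have hu0mem : u0 ∈ T.neighborFinset v0 := (T.mem_neighborFinset ..).mpr huv.symm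
    have h1 : 1 ≤ (T.neighborFinset v0).card := Finset.card_pos.mpr ⟨u0, hu0mem⟩
    rw [hB_def, Finset.card_sdiff_of_subset (Finset.singleton_subset_iff.mpr hu0mem),
      Finset.card_singleton]
    have : T.degree v0 = (T.neighborFinset v0).card := rfl
    omega
  have hsum : ∑ w, T.degree w = 2 * k := by
    rw [T.sum_degrees_eq_twice_card_edges, hTk]
  have hsplit : A.card + B.card + 1 = k := by
    have hsub : ({u0, v0} : Finset W) ⊆ Finset.univ := Finset.subset_univ _
    have h1 := Finset.sum_sdiff (f := fun w => T.degree w) hsub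
    have hpair : ∑ w ∈ ({u0, v0} : Finset W), T.degree w = T.degree u0 + T.degree v0 :=
      Finset.sum_pair hne
    have hrest : ∑ w ∈ Finset.univ \ ({u0, v0} : Finset W), T.degree w
        = (Finset.univ \ ({u0, v0} : Finset W)).card := by
      have hall : ∀ w ∈ Finset.univ \ ({u0, v0} : Finset W), T.degree w = 1 := by
        intro w hw
        rw [Finset.mem_sdiff, Finset.mem_insert, Finset.mem_singleton] at hw
        push_neg at hw
        exact hleaf w hw.2.1 hw.2.2
      rw [Finset.sum_congr rfl hall, Finset.sum_const, smul_eq_mul, mul_one]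
    have hcards : (Finset.univ \ ({u0, v0} : Finset W)).card = Fintype.card W - 2 := by
      rw [Finset.card_sdiff_of_subset hsub, Finset.card_pair hne, Finset.card_univ]
    rw [hpair, hrest, hcards, hsum, hcardW, hdegu0, hdegv0] at h1
    omega
  have hAmem : ∀ x ∈ A, T.Adj u0 x ∧ x ≠ v0 ∧ x ≠ u0 := by
    intro x hx
    rw [hA_def, Finset.mem_sdiff, T.mem_neighborFinset, Finset.mem_singleton] at hx
    exact ⟨hx.1, hx.2, hx.1.ne'⟩
  have hBmem : ∀ x ∈ B, T.Adj v0 x ∧ x ≠ u0 ∧ x ≠ v0 := by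
    intro x hx
    rw [hB_def, Finset.mem_sdiff, T.mem_neighborFinset, Finset.mem_singleton] at hx
    exact ⟨hx.1, hx.2, hx.1.ne'⟩
  have hdisj : ∀ x, x ∈ A → x ∈ B → False := by
    intro x hxA hxB
    obtain ⟨hadjA, hxv0, hxu0⟩ := hAmem x hxA
    obtain ⟨hadjB, -, -⟩ := hBmem x hxB
    have hdeg := hleaf x hxu0 hxv0
    have hsub2 : ({u0, v0} : Finset W) ⊆ T.neighborFinset x := by
      intro z hz
      rw [Finset.mem_insert, Finset.mem_singleton] at hz
      rcases hz with rfl | rfl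
      · exact (T.mem_neighborFinset ..).mpr hadjA.symm
      · exact (T.mem_neighborFinset ..).mpr hadjB.symm
    have hle := Finset.card_le_card hsub2
    rw [Finset.card_pair hne] at hle
    have : T.degree x = (T.neighborFinset x).card := rfl
    omega
  have cover := leaf_cover T hT.isConnected u0 v0 hleaf
  have hclass : ∀ w : W, w = u0 ∨ w = v0 ∨ w ∈ A ∨ w ∈ B := by
    intro w
    by_cases h1 : w = u0
    · exact Or.inl h1
    by_cases h2 : w = v0
    · exact Or.inr (Or.inl h2)
    rcases cover w h1 h2 with h | h
    · refine Or.inr (Or.inr (Or.inl ?_))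
      rw [hA_def, Finset.mem_sdiff, T.mem_neighborFinset, Finset.mem_singleton]
      exact ⟨h, h2⟩
    · refine Or.inr (Or.inr (Or.inr ?_))
      rw [hB_def, Finset.mem_sdiff, T.mem_neighborFinset, Finset.mem_singleton]
      exact ⟨h, h1⟩
  -- Step 3: choose images A' and B'
  have hduA : A.card + 1 ≤ (G.neighborFinset u ∩ t).card := by omega
  have hXA : A.card ≤ ((G.neighborFinset u ∩ t).erase v).card := by
    have := Finset.pred_card_le_card_erase (s := G.neighborFinset u ∩ t) (a := v)
    omega
  obtain ⟨A', hA'sub, hA'card⟩ := Finset.exists_subset_card_eq hXA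
  have hYB : B.card ≤ (((G.neighborFinset v ∩ t).erase u) \ A').card := by
    have h1 := Finset.le_card_sdiff A' ((G.neighborFinset v ∩ t).erase u)
    have h2 := Finset.pred_card_le_card_erase (s := G.neighborFinset v ∩ t) (a := u)
    omega
  obtain ⟨B', hB'sub, hB'card⟩ := Finset.exists_subset_card_eq hYB
  have hA'mem : ∀ z ∈ A', G.Adj u z ∧ z ≠ v := by
    intro z hz
    have := hA'sub hz
    rw [Finset.mem_erase, Finset.mem_inter, G.mem_neighborFinset] at this
    exact ⟨this.2.1, this.1⟩
  have hB'mem : ∀ z ∈ B', G.Adj v z ∧ z ≠ u ∧ z ∉ A' := by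
    intro z hz
    have := hB'sub hz
    rw [Finset.mem_sdiff, Finset.mem_erase, Finset.mem_inter, G.mem_neighborFinset] at this
    exact ⟨this.1.2.1, this.1.1, this.2⟩
  have eA : {x // x ∈ A} ≃ {x // x ∈ A'} := Finset.equivOfCardEq hA'card.symm
  have eB : {x // x ∈ B} ≃ {x // x ∈ B'} := Finset.equivOfCardEq hB'card.symm
  -- Step 4: define the embedding
  set f : W → V := fun w =>
    if w = u0 then u
    else if w = v0 then v
    else if h : w ∈ A then (eA ⟨w, h⟩ : V)
    else if h : w ∈ B then (eB ⟨w, h⟩ : V)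
    else u
    with hf_def
  have hfu0 : f u0 = u := by
    rw [hf_def]
    beta_reduce
    rw [if_pos rfl]
  have hfv0 : f v0 = v := by
    rw [hf_def]
    beta_reduce
    rw [if_neg (Ne.symm hne), if_pos rfl]
  have hfA : ∀ x (hx : x ∈ A), f x = (eA ⟨x, hx⟩ : V) := by
    intro x hx
    obtain ⟨-, hxv, hxu⟩ := hAmem x hx
    rw [hf_def]
    beta_reduce
    rw [if_neg hxu, if_neg hxv, dif_pos hx]
  have hfB : ∀ x (hx : x ∈ B), f x = (eB ⟨x, hx⟩ : V) := by
    intro x hx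
    obtain ⟨-, hxu, hxv⟩ := hBmem x hx
    have hxA : x ∉ A := fun h => hdisj x h hx
    rw [hf_def]
    beta_reduce
    rw [if_neg hxu, if_neg hxv, dif_neg hxA, dif_pos hx]
  -- f is a graph homomorphism
  have hhom : ∀ {x y : W}, T.Adj x y → G.Adj (f x) (f y) := by
    intro x y hxy
    by_cases hx1 : x = u0
    · subst hx1
      by_cases hy2 : y = v0
      · subst hy2; rw [hfu0, hfv0]; exact hadjvu.symm
      · have hyA : y ∈ A := by
          rw [hA_def, Finset.mem_sdiff, T.mem_neighborFinset, Finset.mem_singleton]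
          exact ⟨hxy, hy2⟩
        rw [hfu0, hfA y hyA]
        exact (hA'mem _ (eA ⟨y, hyA⟩).2).1
    by_cases hx2 : x = v0
    · subst hx2
      by_cases hy1 : y = u0
      · subst hy1; rw [hfv0, hfu0]; exact hadjvu
      · have hyB : y ∈ B := by
          rw [hB_def, Finset.mem_sdiff, T.mem_neighborFinset, Finset.mem_singleton]
          exact ⟨hxy, hy1⟩
        rw [hfv0, hfB y hyB]
        exact (hB'mem _ (eB ⟨y, hyB⟩).2).1
    -- x is a leaf, so y is a centre
    have hy : y = u0 ∨ y = v0 := by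
      obtain ⟨z, hz⟩ := Finset.card_eq_one.mp (hleaf x hx1 hx2)
      have hyz : y = z := by
        have : y ∈ T.neighborFinset x := (T.mem_neighborFinset ..).mpr hxy
        rw [hz, Finset.mem_singleton] at this; exact this
      rcases cover x hx1 hx2 with h | h
      · left
        have : u0 ∈ T.neighborFinset x := (T.mem_neighborFinset ..).mpr h.symm
        rw [hz, Finset.mem_singleton] at this
        rw [hyz, ← this]
      · right
        have : v0 ∈ T.neighborFinset x := (T.mem_neighborFinset ..).mpr h.symm
        rw [hz, Finset.mem_singleton] at this
        rw [hyz, ← this]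
    rcases hy with rfl | rfl
    · have hxA : x ∈ A := by
        rw [hA_def, Finset.mem_sdiff, T.mem_neighborFinset, Finset.mem_singleton]
        exact ⟨hxy.symm, hx2⟩
      rw [hfu0, hfA x hxA]
      exact ((hA'mem _ (eA ⟨x, hxA⟩).2).1).symm
    · have hxB : x ∈ B := by
        rw [hB_def, Finset.mem_sdiff, T.mem_neighborFinset, Finset.mem_singleton]
        exact ⟨hxy.symm, hx1⟩
      rw [hfv0, hfB x hxB]
      exact ((hB'mem _ (eB ⟨x, hxB⟩).2).1).symm
  -- f is injective
  have huvne : u ≠ v := hadjvu.ne'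
  have huA' : u ∉ A' := fun h => (hA'mem u h).1.ne rfl
  have hvA' : v ∉ A' := fun h => (hA'mem v h).2 rfl
  have hvB' : v ∉ B' := fun h => (hB'mem v h).1.ne rfl
  have huB' : u ∉ B' := fun h => (hB'mem u h).2.1 rfl
  have hA'B' : ∀ z ∈ B', z ∉ A' := fun z hz => (hB'mem z hz).2.2
  have hinj : Function.Injective f := by
    intro x y hfeq
    rcases hclass x with rfl | rfl | hxA | hxB <;> rcases hclass y with rfl | rfl | hyA | hyB
    · rfl
    · rw [hfu0, hfv0] at hfeq; exact absurd hfeq huvne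
    · rw [hfu0, hfA y hyA] at hfeq
      exact absurd (hfeq ▸ (eA ⟨y, hyA⟩).2) huA'
    · rw [hfu0, hfB y hyB] at hfeq
      exact absurd (hfeq ▸ (eB ⟨y, hyB⟩).2) huB'
    · rw [hfv0, hfu0] at hfeq; exact absurd hfeq.symm huvne
    · rfl
    · rw [hfv0, hfA y hyA] at hfeq
      exact absurd (hfeq ▸ (eA ⟨y, hyA⟩).2) hvA'
    · rw [hfv0, hfB y hyB] at hfeq
      exact absurd (hfeq ▸ (eB ⟨y, hyB⟩).2) hvB'
    · rw [hfA x hxA, hfu0] at hfeq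
      exact absurd (hfeq ▸ (eA ⟨x, hxA⟩).2) huA'
    · rw [hfA x hxA, hfv0] at hfeq
      exact absurd (hfeq ▸ (eA ⟨x, hxA⟩).2) hvA'
    · rw [hfA x hxA, hfA y hyA] at hfeq
      have := eA.injective (Subtype.ext hfeq)
      exact congrArg Subtype.val this
    · rw [hfA x hxA, hfB y hyB] at hfeq
      exact absurd (hfeq ▸ (eA ⟨x, hxA⟩).2) (hA'B' _ (eB ⟨y, hyB⟩).2)
    · rw [hfB x hxB, hfu0] at hfeq
      exact absurd (hfeq ▸ (eB ⟨x, hxB⟩).2) huB'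
    · rw [hfB x hxB, hfv0] at hfeq
      exact absurd (hfeq ▸ (eB ⟨x, hxB⟩).2) hvB'
    · rw [hfB x hxB, hfA y hyA] at hfeq
      exact absurd ((hfeq.symm) ▸ (eA ⟨y, hyA⟩).2) (hA'B' _ (eB ⟨x, hxB⟩).2)
    · rw [hfB x hxB, hfB y hyB] at hfeq
      have := eB.injective (Subtype.ext hfeq)
      exact congrArg Subtype.val this
  exact ⟨⟨f, fun h => hhom h⟩, hinj⟩

/-- Every graph with average degree greater than `k-1` contains every double star
with `k` edges as a subgraph. A double star is a tree with two adjacent centres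
`u, v` such that every other vertex is a leaf. -/
theorem stmt_5 {V W : Type*} [Fintype V] [Nonempty V] [Fintype W]
    (G : SimpleGraph V) [DecidableRel G.Adj]
    (T : SimpleGraph W) [DecidableRel T.Adj] (k : ℕ)
    (havg : ((G.edgeFinset.card : ℚ) * 2) / (Fintype.card V) > (k : ℚ) - 1)
    (hT : T.IsTree) (hTk : T.edgeFinset.card = k)
    (hds : ∃ u v : W, T.Adj u v ∧ ∀ w : W, w ≠ u → w ≠ v → T.degree w = 1) :
    ∃ f : T →g G, Function.Injective f := by
  classical
  obtain ⟨u0, v0, huv, hleaf⟩ := hds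
  rcases le_total ((T.neighborFinset u0 \ {v0}).card) ((T.neighborFinset v0 \ {u0}).card)
      with hab | hab
  · exact main_aux G T k havg hT hTk u0 v0 huv hleaf hab
  · exact main_aux G T k havg hT hTk v0 u0 huv.symm
      (fun w h1 h2 => hleaf w h2 h1) hab
end

section
/- Every graph with average degree greater than k-1 contains every tree with k edges that has a vertex adjacent to at least k/2 leaves. -/
open SimpleGraph Finset

private lemma cross_aux {W : Type*} (T : SimpleGraph W) (A B : Finset W)
    (hout : ∀ y, y ∉ A → ∀ x z, T.Adj x y → T.Adj z y → x = z) :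
    ∀ (n : ℕ) (x a : W) (p : T.Walk x a), p.length ≤ n → x ∈ B → a ∈ A → a ∉ B →
      ∃ b ∈ A, b ∉ B ∧ ∃ j ∈ B, T.Adj j b := by
  intro n
  induction n with
  | zero =>
    intro x a p hp hx ha hab
    cases p with
    | nil => exact absurd hx hab
    | cons h q => simp [SimpleGraph.Walk.length_cons] at hp
  | succ n ih =>
    intro x a p hp hx ha hanB
    cases p with
    | nil => exact absurd hx hanB
    | cons h q =>
      rename_i y
      by_cases hyB : y ∈ B
      · exact ih y a q (by simp [SimpleGraph.Walk.length_cons] at hp; omega) hyB ha hanB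
      · by_cases hyA : y ∈ A
        · exact ⟨y, hyA, hyB, x, hx, h⟩
        · cases q with
          | nil => exact absurd ha hyA
          | cons h2 q2 =>
            rename_i z
            have hz : z = x := hout y hyA z x h2.symm h
            exact ih z a q2 (by simp [SimpleGraph.Walk.length_cons] at hp ⊢; omega)
              (by rw [hz]; exact hx) ha hanB

private lemma uniq_nbr {W : Type*} [DecidableEq W] {T : SimpleGraph W} (hT : T.IsTree) (B : Finset W) (v : W)
    (hconn : ∀ a ∈ B, ∃ p : T.Walk v a, ∀ x ∈ p.support, x ∈ B)
    {b : W} (hb : b ∉ B) {j1 j2 : W} (h1 : j1 ∈ B) (h2 : j2 ∈ B)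
    (a1 : T.Adj b j1) (a2 : T.Adj b j2) : j1 = j2 := by
  obtain ⟨p1, hp1⟩ := hconn j1 h1
  obtain ⟨p2, hp2⟩ := hconn j2 h2
  have hq1 : p1.reverse.bypass.IsPath := p1.reverse.bypass_isPath
  have hq2 : p2.reverse.bypass.IsPath := p2.reverse.bypass_isPath
  have hs1 : b ∉ p1.reverse.bypass.support := fun hmem => hb
    (hp1 _ (by simpa using p1.reverse.support_bypass_subset hmem))
  have hs2 : b ∉ p2.reverse.bypass.support := fun hmem => hb
    (hp2 _ (by simpa using p2.reverse.support_bypass_subset hmem))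
  have hc1 : (SimpleGraph.Walk.cons a1 p1.reverse.bypass).IsPath := hq1.cons hs1
  have hc2 : (SimpleGraph.Walk.cons a2 p2.reverse.bypass).IsPath := hq2.cons hs2
  have heq := (hT.existsUnique_path b v).unique hc1 hc2
  have := congrArg (fun w => SimpleGraph.Walk.getVert w 1) heq
  simpa [SimpleGraph.Walk.getVert_cons_succ] using this

private lemma erase_deg_sum {V : Type*} [Fintype V] [DecidableEq V]
    (G : SimpleGraph V) [DecidableRel G.Adj] (S : Finset V) {a : V} (ha : a ∈ S) :
    ∑ b ∈ S, (G.neighborFinset b ∩ S).card ≤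
      (∑ b ∈ S.erase a, (G.neighborFinset b ∩ S.erase a).card)
        + 2 * (G.neighborFinset a ∩ S).card := by
  have hsplit : ∑ b ∈ S, (G.neighborFinset b ∩ S).card
      = (G.neighborFinset a ∩ S).card + ∑ b ∈ S.erase a, (G.neighborFinset b ∩ S).card :=
    (Finset.add_sum_erase S _ ha).symm
  have hstep : ∀ b ∈ S.erase a, (G.neighborFinset b ∩ S).card ≤
      (G.neighborFinset b ∩ S.erase a).card + (if a ∈ G.neighborFinset b then 1 else 0) := by
    intro b _
    by_cases hab : a ∈ G.neighborFinset b
    · have hsub : G.neighborFinset b ∩ S ⊆ insert a (G.neighborFinset b ∩ S.erase a) := by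
        intro x hx
        simp only [Finset.mem_inter] at hx
        by_cases hxa : x = a
        · simp [hxa]
        · exact Finset.mem_insert_of_mem (Finset.mem_inter.2 ⟨hx.1, Finset.mem_erase.2 ⟨hxa, hx.2⟩⟩)
      calc (G.neighborFinset b ∩ S).card ≤ (insert a (G.neighborFinset b ∩ S.erase a)).card :=
            Finset.card_le_card hsub
        _ ≤ (G.neighborFinset b ∩ S.erase a).card + 1 := Finset.card_insert_le _ _
        _ = _ := by simp [hab]
    · have hsub : G.neighborFinset b ∩ S ⊆ G.neighborFinset b ∩ S.erase a := by
        intro x hx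
        simp only [Finset.mem_inter] at hx
        refine Finset.mem_inter.2 ⟨hx.1, Finset.mem_erase.2 ⟨?_, hx.2⟩⟩
        rintro rfl; exact hab hx.1
      simp only [hab, if_false, add_zero]
      exact Finset.card_le_card hsub
  have hsum : ∑ b ∈ S.erase a, (G.neighborFinset b ∩ S).card ≤
      (∑ b ∈ S.erase a, (G.neighborFinset b ∩ S.erase a).card)
        + ∑ b ∈ S.erase a, (if a ∈ G.neighborFinset b then 1 else 0) := by
    rw [← Finset.sum_add_distrib]
    exact Finset.sum_le_sum hstep
  have hfilt : ∑ b ∈ S.erase a, (if a ∈ G.neighborFinset b then 1 else 0)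
      ≤ (G.neighborFinset a ∩ S).card := by
    have : (∑ b ∈ S.erase a, (if a ∈ G.neighborFinset b then 1 else 0))
        = ((S.erase a).filter (fun b => a ∈ G.neighborFinset b)).card := by
      rw [Finset.card_filter]
    rw [this]
    apply Finset.card_le_card
    intro b hbf
    simp only [Finset.mem_filter, Finset.mem_erase, SimpleGraph.mem_neighborFinset] at hbf ⊢
    exact Finset.mem_inter.2 ⟨by simp [hbf.2.symm], hbf.1.2⟩
  omega

private lemma mindeg {V : Type*} [Fintype V] [DecidableEq V]
    (G : SimpleGraph V) [DecidableRel G.Adj] (k : ℕ) :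
    ∀ (n : ℕ) (S : Finset V), S.card ≤ n → S.Nonempty →
      k * S.card < (∑ a ∈ S, (G.neighborFinset a ∩ S).card) + S.card →
      ∃ S', S' ⊆ S ∧ S'.Nonempty ∧ (∀ a ∈ S', k ≤ 2 * (G.neighborFinset a ∩ S').card) ∧
        ∃ u ∈ S', k ≤ (G.neighborFinset u ∩ S').card := by
  intro n
  induction n with
  | zero => intro S hcard hne _; exact absurd (Finset.card_pos.2 hne) (by omega)
  | succ n ih =>
    intro S hcard hne hd
    by_cases hall : ∀ a ∈ S, k ≤ 2 * (G.neighborFinset a ∩ S).card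
    · refine ⟨S, le_refl _, hne, hall, ?_⟩
      by_contra hmax
      push_neg at hmax
      have : (∑ a ∈ S, (G.neighborFinset a ∩ S).card) + S.card ≤ k * S.card := by
        calc (∑ a ∈ S, (G.neighborFinset a ∩ S).card) + S.card
            = ∑ a ∈ S, ((G.neighborFinset a ∩ S).card + 1) := by
              rw [Finset.sum_add_distrib]; simp
          _ ≤ ∑ _a ∈ S, k := Finset.sum_le_sum (fun a haS => by have := hmax a haS; omega)
          _ = k * S.card := by simp [mul_comm]
      omega
    · push_neg at hall
      obtain ⟨a, haS, hsmall⟩ := hall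
      have hS2 : 2 ≤ S.card := by
        by_contra hc
        push_neg at hc
        have h1 : S = {a} := by
          apply Finset.eq_singleton_iff_unique_mem.2
          refine ⟨haS, fun x hx => ?_⟩
          by_contra hxa
          have : 2 ≤ S.card := Finset.one_lt_card.2 ⟨x, hx, a, haS, hxa⟩
          omega
        have : G.neighborFinset a ∩ S = ∅ := by
          rw [h1]
          ext x
          simp only [Finset.mem_inter, SimpleGraph.mem_neighborFinset, Finset.mem_singleton,
            Finset.notMem_empty, iff_false]
          rintro ⟨hadj, rfl⟩
          exact G.irrefl hadj
        rw [h1] at hd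
        simp [this, Finset.sum_singleton] at hd
        omega
      have hkey := erase_deg_sum G S haS
      have hcard' : (S.erase a).card = S.card - 1 := Finset.card_erase_of_mem haS
      have hne' : (S.erase a).Nonempty := Finset.card_pos.1 (by omega)
      have hd' : k * (S.erase a).card <
          (∑ b ∈ S.erase a, (G.neighborFinset b ∩ S.erase a).card) + (S.erase a).card := by
        have hksub : k * (S.erase a).card + k = k * S.card := by
          rw [hcard']
          have h1 : #S - 1 + 1 = #S := by omega
          rw [← Nat.mul_succ, Nat.succ_eq_add_one, h1]
        omega
      obtain ⟨S', hsub, h1, h2, h3⟩ := ih (S.erase a) (by omega) hne' hd'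
      exact ⟨S', hsub.trans (Finset.erase_subset _ _), h1, h2, h3⟩


private lemma grow {V W : Type*} [Fintype V] [Fintype W] [DecidableEq V] [DecidableEq W]
    (G : SimpleGraph V) [DecidableRel G.Adj] (T : SimpleGraph W) [DecidableRel T.Adj]
    (hT : T.IsTree) (k : ℕ) (hcardW : Fintype.card W = k + 1)
    (v : W) (L A : Finset W)
    (hL : ∀ w ∈ L, T.Adj v w ∧ (∀ x, T.Adj x w → x = v))
    (hkL : k ≤ 2 * L.card) (hA : A = Finset.univ \ L)
    (S : Finset V) (hS : ∀ s ∈ S, k ≤ 2 * (G.neighborFinset s ∩ S).card)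
    (u : V) (hu : k ≤ (G.neighborFinset u ∩ S).card) :
    ∀ (n : ℕ) (B : Finset W) (f : W → V), (Finset.univ \ B).card ≤ n →
      v ∈ B → (B ⊆ A ∨ A ⊆ B) → f v = u → Set.InjOn f B →
      (∀ a ∈ B, f a ∈ S) →
      (∀ a ∈ B, ∀ b ∈ B, T.Adj a b → G.Adj (f a) (f b)) →
      (∀ a ∈ B, ∃ p : T.Walk v a, ∀ x ∈ p.support, x ∈ B) →
      ∃ g : W → V, Function.Injective g ∧ ∀ a b, T.Adj a b → G.Adj (g a) (g b) := by
  have hAcard : A.card + L.card = k + 1 := by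
    rw [hA, Finset.card_univ_diff]
    have : L.card ≤ Fintype.card W := (Finset.card_le_card (Finset.subset_univ L))
    omega
  intro n
  induction n with
  | zero =>
    intro B f hn hvB _ hfv hinj hmapS hhom _
    have hBuniv : B = Finset.univ := by
      have h0 : (Finset.univ \ B).card = 0 := Nat.le_zero.1 hn
      have := Finset.card_eq_zero.1 h0
      have hsub : (Finset.univ : Finset W) ⊆ B := by
        intro x _
        by_contra hx
        exact absurd (Finset.mem_sdiff.2 ⟨Finset.mem_univ x, hx⟩) (by simp [this])
      exact (Finset.eq_univ_iff_forall.2 (fun x => hsub (Finset.mem_univ x)))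
    subst hBuniv
    refine ⟨f, fun a b hab => hinj (by simp) (by simp) hab, fun a b hab => hhom a (by simp) b (by simp) hab⟩
  | succ n ih =>
    intro B f hn hvB hBA hfv hinj hmapS hhom hconn
    by_cases hBuniv : B = Finset.univ
    · subst hBuniv
      refine ⟨f, fun a b hab => hinj (by simp) (by simp) hab, fun a b hab => hhom a (by simp) b (by simp) hab⟩
    -- general facts
    have hBcard : B.card < k + 1 := by
      rw [← hcardW, ← Finset.card_univ]
      exact Finset.card_lt_card (Finset.ssubset_univ_iff.2 hBuniv)
    by_cases hAB : A ⊆ B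
    · -- leaf step
      obtain ⟨w, hw⟩ : ∃ w, w ∉ B := by
        by_contra hc; push_neg at hc
        exact hBuniv (Finset.eq_univ_iff_forall.2 hc)
      have hwL : w ∈ L := by
        by_contra hwl
        exact hw (hAB (by rw [hA]; exact Finset.mem_sdiff.2 ⟨Finset.mem_univ w, hwl⟩))
      obtain ⟨hadj, huniqw⟩ := hL w hwL
      -- pick s
      obtain ⟨s, hsNS, hsB⟩ : ∃ s ∈ G.neighborFinset u ∩ S, s ∉ B.image f := by
        by_contra hc; push_neg at hc
        have hsub : G.neighborFinset u ∩ S ⊆ (B.image f).erase u := by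
          intro x hx
          refine Finset.mem_erase.2 ⟨?_, hc x hx⟩
          rintro rfl
          exact G.irrefl ((SimpleGraph.mem_neighborFinset _ _ _).1 (Finset.mem_inter.1 hx).1)
        have h1 := Finset.card_le_card hsub
        have h2 : ((B.image f).erase u).card ≤ B.card - 1 := by
          have := Finset.card_erase_of_mem (hfv ▸ Finset.mem_image_of_mem f hvB)
          have := Finset.card_image_le (s := B) (f := f)
          omega
        have hBv : 1 ≤ B.card := Finset.card_pos.2 ⟨v, hvB⟩
        omega
      have hvw : v ≠ w := fun h => hw (h ▸ hvB)
      set g := Function.update f w s with hg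
      have hgB : ∀ a ∈ B, g a = f a := fun a ha =>
        Function.update_of_ne (by rintro rfl; exact hw ha) _ _
      have hgw : g w = s := by rw [hg]; exact Function.update_self _ _ _
      have hsS : s ∈ S := (Finset.mem_inter.1 hsNS).2
      have hsN : G.Adj u s := (SimpleGraph.mem_neighborFinset _ _ _).1 (Finset.mem_inter.1 hsNS).1
      refine ih (insert w B) g ?_ (Finset.mem_insert_of_mem hvB)
        (Or.inr (hAB.trans (Finset.subset_insert _ _))) ?_ ?_ ?_ ?_ ?_
      · have heq : Finset.univ \ insert w B = (Finset.univ \ B).erase w := by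
          ext x
          simp only [Finset.mem_sdiff, Finset.mem_insert, Finset.mem_erase, Finset.mem_univ,
            true_and]
          tauto
        have hwmem : w ∈ Finset.univ \ B := Finset.mem_sdiff.2 ⟨Finset.mem_univ w, hw⟩
        rw [heq, Finset.card_erase_of_mem hwmem]
        omega
      · rw [hgB v hvB]; exact hfv
      · intro a ha b hb hab
        simp only [Finset.coe_insert, Set.mem_insert_iff] at ha hb
        rcases ha with haw | ha <;> rcases hb with hbw | hb
        · rw [haw, hbw]
        · rw [haw, hgw, hgB b (Finset.mem_coe.1 hb)] at hab
          exact absurd (Finset.mem_image.2 ⟨b, Finset.mem_coe.1 hb, hab.symm⟩) hsB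
        · rw [hbw, hgw, hgB a (Finset.mem_coe.1 ha)] at hab
          exact absurd (Finset.mem_image.2 ⟨a, Finset.mem_coe.1 ha, hab⟩) hsB
        · rw [hgB a (Finset.mem_coe.1 ha), hgB b (Finset.mem_coe.1 hb)] at hab
          exact hinj ha hb hab
      · intro a ha
        rcases Finset.mem_insert.1 ha with haw | ha
        · rw [haw, hgw]; exact hsS
        · rw [hgB a ha]; exact hmapS a ha
      · intro a ha b hb hab
        rcases Finset.mem_insert.1 ha with haw | ha <;>
          rcases Finset.mem_insert.1 hb with hbw | hb
        · rw [haw, hbw] at hab; exact absurd hab (T.irrefl)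
        · rw [haw] at hab ⊢
          have hbv : b = v := huniqw b hab.symm
          rw [hgw, hgB b hb, hbv, hfv]
          exact hsN.symm
        · rw [hbw] at hab ⊢
          have hav : a = v := huniqw a hab
          rw [hgB a ha, hav, hfv, hgw]
          exact hsN
        · rw [hgB a ha, hgB b hb]
          exact hhom a ha b hb hab
      · intro a ha
        rcases Finset.mem_insert.1 ha with haw | ha
        · rw [haw]
          refine ⟨SimpleGraph.Walk.cons hadj SimpleGraph.Walk.nil, ?_⟩
          intro x hx
          simp only [SimpleGraph.Walk.support_cons, SimpleGraph.Walk.support_nil,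
            List.mem_cons, List.not_mem_nil, or_false] at hx
          rcases hx with hxv | hxw
          · rw [hxv]; exact Finset.mem_insert_of_mem hvB
          · rw [hxw]; exact Finset.mem_insert_self _ _
        · obtain ⟨p, hp⟩ := hconn a ha
          exact ⟨p, fun x hx => Finset.mem_insert_of_mem (hp x hx)⟩
    · -- tree step
      have hBsubA : B ⊆ A := by
        rcases hBA with h | h
        · exact h
        · exact absurd h hAB
      -- find crossing edge
      have hout : ∀ y, y ∉ A → ∀ x z, T.Adj x y → T.Adj z y → x = z := by
        intro y hy x z hx hz
        have hyL : y ∈ L := by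
          by_contra hyl
          exact hy (by rw [hA]; exact Finset.mem_sdiff.2 ⟨Finset.mem_univ y, hyl⟩)
        obtain ⟨_, huy⟩ := hL y hyL
        rw [huy x hx, huy z hz]
      obtain ⟨a0, ha0⟩ : ∃ a0, a0 ∈ A ∧ a0 ∉ B := by
        by_contra hc; push_neg at hc
        exact hAB (fun x hx => hc x hx)
      obtain ⟨p0⟩ : T.Reachable v a0 := hT.isConnected.preconnected v a0
      obtain ⟨b, hbA, hbB, j, hjB, hadj⟩ :=
        cross_aux T A B hout p0.length v a0 p0 le_rfl hvB ha0.1 ha0.2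
      -- unique neighbor of b in B
      have huniqb : ∀ a' ∈ B, T.Adj a' b → a' = j :=
        fun a' ha' hab => uniq_nbr hT B v hconn hbB ha' hjB hab.symm hadj.symm
      -- card bounds
      have hBlt : B.card < A.card := Finset.card_lt_card
        ((Finset.ssubset_iff_of_subset hBsubA).2 ⟨a0, ha0.1, ha0.2⟩)
      have hfjS : f j ∈ S := hmapS j hjB
      have hdegj := hS (f j) hfjS
      -- pick s
      obtain ⟨s, hsNS, hsB⟩ : ∃ s ∈ G.neighborFinset (f j) ∩ S, s ∉ B.image f := by
        by_contra hc; push_neg at hc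
        have hsub : G.neighborFinset (f j) ∩ S ⊆ (B.image f).erase (f j) := by
          intro x hx
          refine Finset.mem_erase.2 ⟨?_, hc x hx⟩
          rintro rfl
          exact G.irrefl ((SimpleGraph.mem_neighborFinset _ _ _).1 (Finset.mem_inter.1 hx).1)
        have h1 := Finset.card_le_card hsub
        have h2 : ((B.image f).erase (f j)).card ≤ B.card - 1 := by
          have := Finset.card_erase_of_mem (Finset.mem_image_of_mem f hjB)
          have := Finset.card_image_le (s := B) (f := f)
          omega
        have hBv : 1 ≤ B.card := Finset.card_pos.2 ⟨v, hvB⟩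
        omega
      have hbB' : b ∉ B := hbB
      set g := Function.update f b s with hg
      have hgB : ∀ a ∈ B, g a = f a := fun a ha =>
        Function.update_of_ne (by rintro rfl; exact hbB' ha) _ _
      have hgw : g b = s := by rw [hg]; exact Function.update_self _ _ _
      have hsS : s ∈ S := (Finset.mem_inter.1 hsNS).2
      have hsN : G.Adj (f j) s := (SimpleGraph.mem_neighborFinset _ _ _).1 (Finset.mem_inter.1 hsNS).1
      refine ih (insert b B) g ?_ (Finset.mem_insert_of_mem hvB)
        (Or.inl (Finset.insert_subset hbA hBsubA)) ?_ ?_ ?_ ?_ ?_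
      · have heq : Finset.univ \ insert b B = (Finset.univ \ B).erase b := by
          ext x
          simp only [Finset.mem_sdiff, Finset.mem_insert, Finset.mem_erase, Finset.mem_univ,
            true_and]
          tauto
        have hwmem : b ∈ Finset.univ \ B := Finset.mem_sdiff.2 ⟨Finset.mem_univ b, hbB'⟩
        rw [heq, Finset.card_erase_of_mem hwmem]
        omega
      · rw [hgB v hvB]; exact hfv
      · intro a ha b' hb hab
        simp only [Finset.coe_insert, Set.mem_insert_iff] at ha hb
        rcases ha with haw | ha <;> rcases hb with hbw | hb
        · rw [haw, hbw]
        · rw [haw, hgw, hgB b' (Finset.mem_coe.1 hb)] at hab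
          exact absurd (Finset.mem_image.2 ⟨b', Finset.mem_coe.1 hb, hab.symm⟩) hsB
        · rw [hbw, hgw, hgB a (Finset.mem_coe.1 ha)] at hab
          exact absurd (Finset.mem_image.2 ⟨a, Finset.mem_coe.1 ha, hab⟩) hsB
        · rw [hgB a (Finset.mem_coe.1 ha), hgB b' (Finset.mem_coe.1 hb)] at hab
          exact hinj ha hb hab
      · intro a ha
        rcases Finset.mem_insert.1 ha with haw | ha
        · rw [haw, hgw]; exact hsS
        · rw [hgB a ha]; exact hmapS a ha
      · intro a ha b' hb hab
        rcases Finset.mem_insert.1 ha with haw | ha <;>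
          rcases Finset.mem_insert.1 hb with hbw | hb
        · rw [haw, hbw] at hab; exact absurd hab (T.irrefl)
        · rw [haw] at hab ⊢
          have hbj : b' = j := huniqb b' hb hab.symm
          rw [hgw, hgB b' hb, hbj]
          exact hsN.symm
        · rw [hbw] at hab ⊢
          have haj : a = j := huniqb a ha hab
          rw [hgB a ha, haj, hgw]
          exact hsN
        · rw [hgB a ha, hgB b' hb]
          exact hhom a ha b' hb hab
      · intro a ha
        rcases Finset.mem_insert.1 ha with haw | ha
        · rw [haw]
          obtain ⟨p, hp⟩ := hconn j hjB
          refine ⟨p.concat hadj, ?_⟩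
          intro x hx
          rw [SimpleGraph.Walk.support_concat] at hx
          simp only [List.concat_eq_append, List.mem_append, List.mem_singleton] at hx
          rcases hx with hx | hxb
          · exact Finset.mem_insert_of_mem (hp x hx)
          · rw [hxb]; exact Finset.mem_insert_self _ _
        · obtain ⟨p, hp⟩ := hconn a ha
          exact ⟨p, fun x hx => Finset.mem_insert_of_mem (hp x hx)⟩

/-- Every graph with average degree greater than `k-1` contains every tree with `k`
edges that has a vertex adjacent to at least `k/2` leaves. -/
theorem stmt_7 {V W : Type*} [Fintype V] [Nonempty V] [Fintype W] [DecidableEq W]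
    (G : SimpleGraph V) [DecidableRel G.Adj]
    (T : SimpleGraph W) [DecidableRel T.Adj] (k : ℕ)
    (havg : ((G.edgeFinset.card : ℚ) * 2) / (Fintype.card V) > (k : ℚ) - 1)
    (hT : T.IsTree) (hTk : T.edgeFinset.card = k)
    (hleaves : ∃ v : W,
      k ≤ 2 * ((T.neighborFinset v).filter (fun w => T.degree w = 1)).card) :
    ∃ f : T →g G, Function.Injective f := by
  classical
  obtain ⟨v, hv⟩ := hleaves
  set L := (T.neighborFinset v).filter (fun w => T.degree w = 1) with hLdef
  have hcardW : Fintype.card W = k + 1 := by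
    have := hT.card_edgeFinset
    omega
  have hn : 0 < Fintype.card V := Fintype.card_pos
  have hE : k * Fintype.card V < 2 * G.edgeFinset.card + Fintype.card V := by
    have hq : ((k : ℚ) - 1) * (Fintype.card V : ℚ) < (G.edgeFinset.card : ℚ) * 2 := by
      have hpos : (0 : ℚ) < (Fintype.card V : ℚ) := by exact_mod_cast hn
      exact (lt_div_iff₀ hpos).1 havg
    have hq2 : (k : ℚ) * (Fintype.card V : ℚ) <
        2 * (G.edgeFinset.card : ℚ) + (Fintype.card V : ℚ) := by nlinarith
    exact_mod_cast hq2
  have hsum : ∑ a ∈ Finset.univ, ((G.neighborFinset a ∩ Finset.univ).card)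
      = 2 * G.edgeFinset.card := by
    calc ∑ a ∈ Finset.univ, ((G.neighborFinset a ∩ Finset.univ).card)
        = ∑ a, G.degree a := by
          apply Finset.sum_congr rfl
          intro a _
          rw [Finset.inter_univ]
          rfl
      _ = 2 * G.edgeFinset.card := G.sum_degrees_eq_twice_card_edges
  obtain ⟨S, hSsub, hSne, hS, u, huS, hu⟩ :=
    mindeg G k (Fintype.card V) Finset.univ (le_of_eq Finset.card_univ) Finset.univ_nonempty
      (by rw [hsum, Finset.card_univ]; omega)
  have hLprop : ∀ w ∈ L, T.Adj v w ∧ ∀ x, T.Adj x w → x = v := by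
    intro w hw
    rw [hLdef, Finset.mem_filter, SimpleGraph.mem_neighborFinset] at hw
    refine ⟨hw.1, fun x hx => ?_⟩
    have hvN : v ∈ T.neighborFinset w := (SimpleGraph.mem_neighborFinset _ _ _).2 hw.1.symm
    have hxN : x ∈ T.neighborFinset w := (SimpleGraph.mem_neighborFinset _ _ _).2 hx.symm
    have hcard1 : (T.neighborFinset w).card = 1 := hw.2
    obtain ⟨c, hc⟩ := Finset.card_eq_one.1 hcard1
    rw [hc, Finset.mem_singleton] at hvN hxN
    rw [hxN, hvN]
  have hvL : v ∉ L := by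
    rw [hLdef, Finset.mem_filter]
    rintro ⟨hvm, -⟩
    exact T.irrefl ((SimpleGraph.mem_neighborFinset _ _ _).1 hvm)
  obtain ⟨g, hginj, hghom⟩ :=
    grow G T hT k hcardW v L (Finset.univ \ L) hLprop hv rfl S hS u hu
      ((Finset.univ \ {v}).card) {v} (fun _ => u)
      (by
        apply Finset.card_le_card
        intro x hx
        exact hx)
      (Finset.mem_singleton_self v)
      (Or.inl (Finset.singleton_subset_iff.2 (Finset.mem_sdiff.2 ⟨Finset.mem_univ v, hvL⟩)))
      rfl
      (by
        intro x hx y hy _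
        rw [Finset.coe_singleton, Set.mem_singleton_iff] at hx hy
        rw [hx, hy])
      (fun a _ => huS)
      (by
        intro a ha b hb hab
        rw [Finset.mem_singleton] at ha hb
        rw [ha, hb] at hab
        exact absurd hab (T.irrefl))
      (by
        intro a ha
        rw [Finset.mem_singleton] at ha
        rw [ha]
        exact ⟨SimpleGraph.Walk.nil, by
          intro x hx
          simp only [SimpleGraph.Walk.support_nil, List.mem_singleton] at hx
          rw [hx]
          exact Finset.mem_singleton_self v⟩)
  exact ⟨⟨g, fun hadj => hghom _ _ hadj⟩, hginj⟩
end

section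
/- If both k and ℓ are even, then in every 2-colouring of the edges of K_{k+ℓ-1}, either there is a red star with k edges or a blue star with ℓ edges; moreover there is a 2-colouring of K_{k+ℓ-2} with neither. Hence R(K_{1,k}, K_{1,ℓ}) = k+ℓ-1 for even k and ℓ. -/
/-!
A star `K_{1,m}` embeds in a graph exactly when some vertex has degree at least `m`.
If a red/blue colouring of `K_{k+ℓ-1}` had neither star, every vertex would have red degree
at most `k - 1` and blue degree at most `ℓ - 1`; as these add up to `k + ℓ - 2`, the red graph
would be `(k - 1)`-regular on `k + ℓ - 1` vertices, both odd numbers, contradicting the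
handshake lemma. Conversely, on `k + ℓ - 2` vertices a `(k - 2)`-regular red graph (a circulant
graph on `ZMod (k + ℓ - 2)`) has red degree `k - 2` and blue degree `ℓ - 1` everywhere.
-/

theorem ZMod.intCast_injOn_Icc {n r : ℕ} (h : 2 * r < n) :
    Set.InjOn (Int.cast : ℤ → ZMod n) (Set.Icc (-r) r) := by
  intro i hi j hj hij
  rw [ZMod.intCast_eq_intCast_iff_dvd_sub] at hij
  have := Int.eq_zero_of_abs_lt_dvd hij (abs_lt.mpr ⟨by grind, by grind⟩)
  omega

namespace SimpleGraph

variable {V : Type*} [Fintype V]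

theorem neighborSet_completeBipartiteGraph_inl {α β : Type*} (a : α) :
    (completeBipartiteGraph α β).neighborSet (Sum.inl a) = Set.range Sum.inr := by
  ext (b | b) <;> simp

theorem degree_completeBipartiteGraph_inl {α β : Type*} [Fintype β] (a : α)
    [Fintype ((completeBipartiteGraph α β).neighborSet (Sum.inl a))] :
    (completeBipartiteGraph α β).degree (Sum.inl a) = Fintype.card β := by
  rw [← card_neighborSet_eq_degree]
  exact Fintype.card_congr <| (Equiv.setCongr (neighborSet_completeBipartiteGraph_inl a)).trans
    (Equiv.ofInjective _ Sum.inr_injective).symm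

theorem exists_injective_hom_star_iff_exists_le_degree {G : SimpleGraph V} [DecidableRel G.Adj]
    {m : ℕ} :
    (∃ f : completeBipartiteGraph (Fin 1) (Fin m) →g G, Function.Injective f) ↔
      ∃ v, m ≤ G.degree v := by
  classical
  constructor
  · rintro ⟨f, hf⟩
    refine ⟨f (Sum.inl 0), ?_⟩
    simpa [degree_completeBipartiteGraph_inl] using (f.toCopy hf).degree_le (Sum.inl 0)
  · rintro ⟨v, hv⟩
    obtain ⟨nbr⟩ := Function.Embedding.nonempty_of_card_le
      (by rwa [Fintype.card_fin, card_neighborSet_eq_degree] :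
        Fintype.card (Fin m) ≤ Fintype.card (G.neighborSet v))
    have hadj (i : Fin m) : G.Adj v (nbr i) := (nbr i).2
    refine ⟨⟨Sum.elim (fun _ => v) (fun i => nbr i), ?_⟩, ?_⟩
    · rintro (a | a) (b | b) hab <;> simp_all [(hadj _).symm]
    · exact Function.Injective.sumElim (fun _ _ _ => Subsingleton.elim _ _)
        (Subtype.val_injective.comp nbr.injective) fun _ i => (hadj i).ne

theorem IsRegularOfDegree.even_card_of_odd {G : SimpleGraph V} [DecidableRel G.Adj] {d : ℕ}
    (hG : G.IsRegularOfDegree d) (hd : Odd d) : Even (Fintype.card V) := by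
  simpa [hG.degree_eq, hd] using G.even_card_odd_degree_vertices

theorem isRegularOfDegree_of_degree_lt_of_degree_compl_lt [DecidableEq V] {G : SimpleGraph V}
    [DecidableRel G.Adj] {k ℓ : ℕ} (hV : Fintype.card V + 1 = k + ℓ)
    (hG : ∀ v, G.degree v < k) (hGc : ∀ v, Gᶜ.degree v < ℓ) : G.IsRegularOfDegree (k - 1) := by
  intro v
  have := hG v
  have := hGc v
  rw [degree_compl] at this
  omega

theorem exists_le_degree_or_le_degree_compl [DecidableEq V] (G : SimpleGraph V)
    [DecidableRel G.Adj] {k ℓ : ℕ} (hV : Fintype.card V + 1 = k + ℓ) (hk : k ≠ 0)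
    (hke : Even k) (hℓe : Even ℓ) : (∃ v, k ≤ G.degree v) ∨ ∃ v, ℓ ≤ Gᶜ.degree v := by
  by_contra! h
  have hreg := isRegularOfDegree_of_degree_lt_of_degree_compl_lt hV h.1 h.2
  have hodd : Odd (k - 1) := by rw [Nat.odd_sub' (by omega)]; simp [hke]
  have hsucc : Even (Fintype.card V + 1) := hV ▸ hke.add hℓe
  exact Nat.even_add_one.mp hsucc (hreg.even_card_of_odd hodd)

/-- Vertices at cyclic distance between `1` and `r` are adjacent. -/
def bandCirculant (n r : ℕ) : SimpleGraph (ZMod n) :=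
  circulantGraph (Int.cast '' Set.Icc (-(r : ℤ)) r)

theorem bandCirculant_adj {n r : ℕ} {v w : ZMod n} :
    (bandCirculant n r).Adj v w ↔ v ≠ w ∧ ∃ i ∈ Set.Icc (-(r : ℤ)) r, v + i = w := by
  have hneg {x : ZMod n} (hx : x ∈ Int.cast '' Set.Icc (-(r : ℤ)) r) :
      -x ∈ Int.cast '' Set.Icc (-(r : ℤ)) r := by
    obtain ⟨i, hi, rfl⟩ := hx
    exact ⟨-i, by grind, by push_cast; rfl⟩
  rw [bandCirculant, circulantGraph_adj, ← neg_sub w v,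
    or_iff_right_of_imp fun h => by simpa using hneg h]
  simp only [Set.mem_image, eq_sub_iff_add_eq']

theorem isRegularOfDegree_bandCirculant {n r : ℕ} [NeZero n] (h : 2 * r < n)
    [DecidableRel (bandCirculant n r).Adj] : (bandCirculant n r).IsRegularOfDegree (2 * r) := by
  intro v
  have hnbr : (bandCirculant n r).neighborFinset v =
      ((Finset.Icc (-(r : ℤ)) r).image (fun i : ℤ => v + i)).erase v := by
    ext w
    simp [bandCirculant_adj, and_comm, ne_comm]
  rw [← card_neighborFinset_eq_degree, hnbr,
    Finset.card_erase_of_mem (Finset.mem_image.mpr ⟨0, by simp, by simp⟩),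
    Finset.card_image_of_injOn, Int.card_Icc]
  · omega
  · intro i hi j hj hij
    exact ZMod.intCast_injOn_Icc h (by simpa using hi) (by simpa using hj) (add_left_cancel hij)

theorem exists_isRegularOfDegree_of_even {d : ℕ} (hd : Even d) (hdV : d < Fintype.card V) :
    ∃ (G : SimpleGraph V) (_ : DecidableRel G.Adj), G.IsRegularOfDegree d := by
  classical
  obtain ⟨r, rfl⟩ := hd
  have : NeZero (Fintype.card V) := ⟨by omega⟩
  let e : V ≃ ZMod (Fintype.card V) := (Fintype.equivFin V).trans (ZMod.finEquiv _).toEquiv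
  refine ⟨(bandCirculant _ r).comap e, inferInstance, fun v => ?_⟩
  rw [← (Iso.comap e _).degree_eq v, ← two_mul]
  exact isRegularOfDegree_bandCirculant (by omega) _

theorem exists_forall_degree_lt_and_degree_compl_lt [DecidableEq V] {k ℓ : ℕ}
    (hV : Fintype.card V + 2 = k + ℓ) (hk : k ≠ 0) (hℓ : ℓ ≠ 0) (hke : Even k) :
    ∃ (G : SimpleGraph V) (_ : DecidableRel G.Adj),
      (∀ v, G.degree v < k) ∧ ∀ v, Gᶜ.degree v < ℓ := by
  have hk2 : 2 ≤ k := by obtain ⟨j, rfl⟩ := hke; omega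
  obtain ⟨G, _, hG⟩ :=
    exists_isRegularOfDegree_of_even (V := V) (hke.tsub even_two) (by omega)
  refine ⟨G, inferInstance, fun v => ?_, fun v => ?_⟩
  · rw [hG.degree_eq]
    omega
  · rw [hG.compl.degree_eq]
    omega

end SimpleGraph

/-- For even `k, ℓ ≥ 1`: every 2-colouring of `K_{k+ℓ-1}` contains a red star with
`k` edges or a blue star with `ℓ` edges, and some 2-colouring of `K_{k+ℓ-2}` has
neither; hence `R(K_{1,k}, K_{1,ℓ}) = k+ℓ-1`. -/
theorem stmt_11 (k ℓ : ℕ) (hk : 1 ≤ k) (hℓ : 1 ≤ ℓ)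
    (hke : Even k) (hℓe : Even ℓ) :
    (∀ R : SimpleGraph (Fin (k + ℓ - 1)),
      (∃ f : completeBipartiteGraph (Fin 1) (Fin k) →g R, Function.Injective f) ∨
      (∃ f : completeBipartiteGraph (Fin 1) (Fin ℓ) →g Rᶜ, Function.Injective f)) ∧
    (∃ R : SimpleGraph (Fin (k + ℓ - 2)),
      (¬ ∃ f : completeBipartiteGraph (Fin 1) (Fin k) →g R, Function.Injective f) ∧
      (¬ ∃ f : completeBipartiteGraph (Fin 1) (Fin ℓ) →g Rᶜ, Function.Injective f)) := by
  classical
  refine ⟨fun R => ?_, ?_⟩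
  · simp only [SimpleGraph.exists_injective_hom_star_iff_exists_le_degree]
    exact R.exists_le_degree_or_le_degree_compl (by simp; omega) (by omega) hke hℓe
  · obtain ⟨R, _, hR, hRc⟩ :=
      SimpleGraph.exists_forall_degree_lt_and_degree_compl_lt (V := Fin (k + ℓ - 2))
        (k := k) (ℓ := ℓ) (by simp; omega) (by omega) (by omega) hke
    refine ⟨R, ?_, ?_⟩ <;> simpa [SimpleGraph.exists_injective_hom_star_iff_exists_le_degree]
end

section
/- If at least one of k, ℓ is odd, then R(K_{1,k}, K_{1,ℓ}) = k+ℓ. -/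
/-!
A vertex of a red/blue colouring of `K_{k+ℓ}` has `k + ℓ - 1` neighbours, so it has at least
`k` red or at least `ℓ` blue ones. A colouring of `K_{k+ℓ-1}` with neither star is the same as a
`(k - 1)`-regular red graph on `k + ℓ - 1` vertices, which exists because the parity hypothesis
makes `(k + ℓ - 1)(k - 1)` even: for even degree `2h < n` take the circulant graph on `Fin n`
with jumps `±1, …, ±h`, and for odd degree (so `n` even) the complement of one of even degree.
-/

open Finset SimpleGraph Function
open scoped Pointwise

namespace SimpleGraph

variable {V : Type*} (G : SimpleGraph V)

theorem exists_injective_hom_iff_isContained {W : Type*} (H : SimpleGraph W) :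
    (∃ f : H →g G, Injective f) ↔ H ⊑ G :=
  ⟨fun ⟨f, hf⟩ ↦ ⟨f.toCopy hf⟩, fun ⟨c⟩ ↦ ⟨c.toHom, c.injective⟩⟩

theorem exists_injective_hom_completeBipartiteGraph_fin_one_iff [Fintype V] [DecidableRel G.Adj]
    (k : ℕ) :
    (∃ f : completeBipartiteGraph (Fin 1) (Fin k) →g G, Injective f) ↔
      ∃ v, k ≤ G.degree v := by
  classical
  simp only [exists_injective_hom_iff_isContained, completeBipartiteGraph_isContained_iff,
    Fintype.card_fin, card_eq_one]
  constructor
  · rintro ⟨_, right, ⟨v, rfl⟩, rfl, hadj⟩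
    refine ⟨v, ?_⟩
    rw [← card_neighborFinset_eq_degree]
    exact card_le_card fun w hw ↦ (mem_neighborFinset _ _ _).2 (hadj (by simp) hw)
  · rintro ⟨v, hv⟩
    obtain ⟨right, hsub, hcard⟩ := exists_subset_card_eq (s := G.neighborFinset v) (by simpa)
    exact ⟨{v}, right, ⟨v, rfl⟩, hcard, fun _ hu w hw ↦ by
      simp only [coe_singleton, Set.mem_singleton_iff] at hu
      exact hu ▸ (mem_neighborFinset _ _ _).1 (hsub hw)⟩

theorem le_degree_or_le_degree_compl [Fintype V] [DecidableEq V] [DecidableRel G.Adj] (v : V)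
    {k ℓ : ℕ} (h : k + ℓ ≤ Fintype.card V) : k ≤ G.degree v ∨ ℓ ≤ Gᶜ.degree v := by
  have := G.degree_lt_card_verts v
  rw [degree_compl]
  omega

theorem circulantGraph_isRegularOfDegree {A : Type*} [AddGroup A] [Fintype A] [DecidableEq A]
    (S : Finset A) (h0 : 0 ∉ S) (hS : -S = S) [DecidableRel (circulantGraph (S : Set A)).Adj] :
    (circulantGraph (S : Set A)).IsRegularOfDegree #S := by
  intro u
  have hnbr : (circulantGraph (S : Set A)).neighborFinset u = S.image (· + u) := by
    ext v
    have hsymm : u - v ∈ S ↔ v - u ∈ S := by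
      rw [← neg_sub, ← Finset.mem_neg', hS]
    simp only [mem_neighborFinset, circulantGraph_adj, mem_coe, hsymm, or_self, mem_image]
    constructor
    · rintro ⟨-, h⟩
      exact ⟨v - u, h, sub_add_cancel v u⟩
    · rintro ⟨a, ha, rfl⟩
      refine ⟨fun h ↦ h0 ?_, by simpa using ha⟩
      simpa [add_eq_right.1 h.symm] using ha
  rw [← card_neighborFinset_eq_degree, hnbr, card_image_of_injective _ (add_left_injective u)]

open Classical in
theorem exists_isRegularOfDegree_two_mul {n h : ℕ} (hn : 2 * h < n) :
    ∃ G : SimpleGraph (Fin n), G.IsRegularOfDegree (2 * h) := by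
  have : NeZero n := ⟨by omega⟩
  set A : Finset (Fin n) := Ioc 0 ⟨h, by omega⟩
  have hA : ∀ x : Fin n, x ∈ A ↔ 0 < x.val ∧ x.val ≤ h := by
    intro x
    simp only [A, mem_Ioc, Fin.lt_def, Fin.le_def]
    rfl
  have hdisj : Disjoint A (-A) := by
    rw [Finset.disjoint_left]
    intro x hx hnx
    rw [Finset.mem_neg', hA] at hnx
    rw [hA] at hx
    rw [Fin.val_neg', Nat.mod_eq_of_lt (by omega)] at hnx
    omega
  refine ⟨circulantGraph ↑(A ∪ -A), ?_⟩
  convert circulantGraph_isRegularOfDegree (A ∪ -A) ?_ ?_ using 1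
  · rw [card_union_of_disjoint hdisj, card_neg, Fin.card_Ioc, Fin.val_zero, Fin.val_mk]
    omega
  · simp [hA]
  · ext x
    simp only [Finset.mem_neg', mem_union, neg_neg, or_comm]

open Classical in
theorem exists_isRegularOfDegree {n d : ℕ} (hd : d < n) (hpar : Even (n * d)) :
    ∃ G : SimpleGraph (Fin n), G.IsRegularOfDegree d := by
  rcases Nat.even_or_odd d with ⟨h, rfl⟩ | hodd
  · simpa [two_mul] using exists_isRegularOfDegree_two_mul (h := h) (by omega)
  · have hn : Even n := (Nat.even_mul.1 hpar).resolve_right (Nat.not_even_iff_odd.2 hodd)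
    obtain ⟨h, hh⟩ : Even (n - 1 - d) := by
      rw [Nat.even_sub (by omega), Nat.even_sub (by omega)]
      simp [hn, hodd]
    obtain ⟨G, hG⟩ := exists_isRegularOfDegree_two_mul (n := n) (h := h) (by omega)
    refine ⟨Gᶜ, ?_⟩
    convert hG.compl using 1
    rw [Fintype.card_fin]
    omega

end SimpleGraph

/-- If at least one of `k, ℓ ≥ 1` is odd, then `R(K_{1,k}, K_{1,ℓ}) = k+ℓ`:
every 2-colouring of `K_{k+ℓ}` contains a red star with `k` edges or a blue star
with `ℓ` edges, and some 2-colouring of `K_{k+ℓ-1}` has neither. -/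
theorem stmt_12 (k ℓ : ℕ) (hk : 1 ≤ k) (hℓ : 1 ≤ ℓ) (hodd : Odd k ∨ Odd ℓ) :
    (∀ R : SimpleGraph (Fin (k + ℓ)),
      (∃ f : completeBipartiteGraph (Fin 1) (Fin k) →g R, Function.Injective f) ∨
      (∃ f : completeBipartiteGraph (Fin 1) (Fin ℓ) →g Rᶜ, Function.Injective f)) ∧
    (∃ R : SimpleGraph (Fin (k + ℓ - 1)),
      (¬ ∃ f : completeBipartiteGraph (Fin 1) (Fin k) →g R, Function.Injective f) ∧
      (¬ ∃ f : completeBipartiteGraph (Fin 1) (Fin ℓ) →g Rᶜ, Function.Injective f)) := by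
  classical
  simp only [exists_injective_hom_completeBipartiteGraph_fin_one_iff, not_exists, not_le]
  refine ⟨fun R ↦ ?_, ?_⟩
  · rcases R.le_degree_or_le_degree_compl ⟨0, by omega⟩ (Fintype.card_fin _).ge with h | h
    exacts [Or.inl ⟨_, h⟩, Or.inr ⟨_, h⟩]
  · have hpar : Even ((k + ℓ - 1) * (k - 1)) := by
      rw [Nat.odd_iff, Nat.odd_iff] at hodd
      rw [Nat.even_mul, Nat.even_iff, Nat.even_iff]
      omega
    obtain ⟨R, hR⟩ := exists_isRegularOfDegree (by omega : k - 1 < k + ℓ - 1) hpar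
    refine ⟨R, fun v ↦ ?_, fun v ↦ ?_⟩
    · rw [hR v]; omega
    · rw [hR.compl v, Fintype.card_fin]; omega
end
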